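/- Let F be a field of characteristic different from 2 and let a, b, c, d ∈ F with b² = a·c, a ≠ 0 and d ≠ 0. Let M = !![a, b; b, c]. Then there exists a symplectic matrix S over F with Sᵀ * M * S = !![d, 0; 0, 0] if and only if a·d is a square in F. -/

import Mathlib

open Matrix

/-- The standard symplectic 2×2 matrix. -/
def Omega2 (F : Type*) [Zero F] [One F] [Neg F] : Matrix (Fin 2) (Fin 2) F :=
  !![0, 1; -1, 0]

/-!
Over a commutative ring `Sᵀ Ω₀ S = det S • Ω₀`, so the symplectic 2×2 matrices are those of
determinant one. The `(0,0)` entry of `Sᵀ M S` is the value `Q(x, y) = a x² + 2bxy + cy²` of the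
form of `M` at the first column `(x, y)` of `S`, and `b² = ac` makes `a·Q(x, y) = (ax + by)²` a
square. Conversely, if `ad = t²` the upper triangular matrix `!![t/a, -b/t; 0, a/t]` has
determinant one and carries `M` to `!![d, 0; 0, 0]`.
-/

section CommRing

variable {R : Type*} [CommRing R]

theorem transpose_mul_Omega2_mul (S : Matrix (Fin 2) (Fin 2) R) :
    Sᵀ * Omega2 R * S = S.det • Omega2 R := by
  ext i j
  fin_cases i <;> fin_cases j <;>
    simp [Omega2, Matrix.mul_apply, Fin.sum_univ_two, Matrix.det_fin_two] <;> ring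

theorem transpose_mul_symm_mul_apply_zero_zero (a b c : R) (S : Matrix (Fin 2) (Fin 2) R) :
    (Sᵀ * !![a, b; b, c] * S) 0 0 =
      a * S 0 0 ^ 2 + 2 * b * S 0 0 * S 1 0 + c * S 1 0 ^ 2 := by
  simp only [Matrix.mul_apply, transpose_apply, of_apply, cons_val', cons_val_fin_one,
    Fin.sum_univ_two, cons_val_zero, cons_val_one]
  ring

theorem transpose_mul_symm_mul_of_upperTriangular (a b c p q r : R) :
    !![p, q; 0, r]ᵀ * !![a, b; b, c] * !![p, q; 0, r] =
      !![a * p ^ 2, p * (a * q + b * r);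
        p * (a * q + b * r), a * q ^ 2 + 2 * b * q * r + c * r ^ 2] := by
  ext i j
  fin_cases i <;> fin_cases j <;>
    simp [Matrix.mul_apply, Fin.sum_univ_two] <;> ring

theorem mul_binaryForm_eq_sq_of_sq_eq_mul {a b c : R} (hb : b ^ 2 = a * c) (x y : R) :
    a * (a * x ^ 2 + 2 * b * x * y + c * y ^ 2) = (a * x + b * y) ^ 2 := by
  linear_combination -y ^ 2 * hb

end CommRing

theorem degenerate_normal_form_iff_isSquare_general
    (F : Type*) [Field F]
    (a b c d : F) (hb : b ^ 2 = a * c) (ha : a ≠ 0) (hd : d ≠ 0) :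
    (∃ S : Matrix (Fin 2) (Fin 2) F,
      Sᵀ * Omega2 F * S = Omega2 F ∧ Sᵀ * !![a, b; b, c] * S = !![d, 0; 0, 0]) ↔
    IsSquare (a * d) := by
  constructor
  · rintro ⟨S, -, hM⟩
    have hd_eq : d = a * S 0 0 ^ 2 + 2 * b * S 0 0 * S 1 0 + c * S 1 0 ^ 2 := by
      rw [← transpose_mul_symm_mul_apply_zero_zero, hM]
      rfl
    rw [hd_eq, mul_binaryForm_eq_sq_of_sq_eq_mul hb]
    exact IsSquare.sq _
  · rintro ⟨t, ht⟩
    have ht0 : t ≠ 0 := by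
      rintro rfl
      exact mul_ne_zero ha hd (by simpa using ht)
    refine ⟨!![t / a, -b / t; 0, a / t], ?_, ?_⟩
    · have hdet : t / a * (a / t) - -b / t * 0 = 1 := by
        rw [mul_zero, sub_zero, div_mul_div_cancel₀ ha, div_self ht0]
      rw [transpose_mul_Omega2_mul, Matrix.det_fin_two_of, hdet, one_smul]
    · have h00 : a * (t / a) ^ 2 = d := by
        field_simp
        linear_combination -ht
      have h01 : a * (-b / t) + b * (a / t) = 0 := by ring
      have h11 : a * (-b / t) ^ 2 + 2 * b * (-b / t) * (a / t) + c * (a / t) ^ 2 = 0 := by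
        field_simp
        linear_combination -a * hb
      rw [transpose_mul_symm_mul_of_upperTriangular, h00, h01, h11, mul_zero]

/-- A degenerate symmetric 2×2 matrix `!![a, b; b, c]` with `b² = a·c` is symplectically
equivalent to `!![d, 0; 0, 0]` if and only if `a·d` is a square. -/
theorem degenerate_normal_form_iff_isSquare
    (F : Type*) [Field F] (hchar : ringChar F ≠ 2)
    (a b c d : F) (hb : b ^ 2 = a * c) (ha : a ≠ 0) (hd : d ≠ 0) :
    (∃ S : Matrix (Fin 2) (Fin 2) F,
      Sᵀ * Omega2 F * S = Omega2 F ∧ Sᵀ * !![a, b; b, c] * S = !![d, 0; 0, 0]) ↔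
    IsSquare (a * d) :=
  degenerate_normal_form_iff_isSquare_general F a b c d hb ha hd
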